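/- arXiv:2406.18188 — 5 statements merged into one kernel-verified Lean document; each statement's English description precedes it below -/
import Mathlib

section
/- Let n ≥ 2 and let k be an integer with k̄ ≠ 0̄ in ℤ/2^nℤ. If the size r of the k̄-monomial minimal solution modulo 2^n is even, then M_r(k̄,...,k̄) = Id in SL₂(ℤ/2^nℤ). -/
/-!
Suppose `M := matE k` had `M ^ (2 * s) = -1`. Then `A := M ^ s` has determinant `1` and
`A * A = -1`, so Cayley–Hamilton `A * A - (tr A) • A + 1 = 0` forces `tr A = 0`.
But `tr (M ^ s)` never vanishes modulo `2 ^ n`. For odd `k` reduce modulo `4`: there `k * k = 1`,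
so `M ^ 3 = -k • 1` is a unit scalar and the traces `2, k, -1` of `M ^ 0, M, M ^ 2` are nonzero.
For even `k` with `2`-adic valuation `v < n` reduce modulo `2 ^ (v + 1)`: there `k * k = 0` and
`2 * k = 0`, so `M ^ 4 = 1` and the traces of `M ^ 0, …, M ^ 3` are `2, k, -2, k`.
-/

def matE {N : ℕ} (a : ZMod N) : Matrix (Fin 2) (Fin 2) (ZMod N) := !![a, -1; 1, 0]

/-- `M_m(k,…,k) = ±Id` over `ℤ/Nℤ` (constant tuple, so a matrix power). -/
def isMonSol {N : ℕ} (k : ZMod N) (m : ℕ) : Prop :=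
  matE k ^ m = 1 ∨ matE k ^ m = -1

/-- `r` is the size of the `k`-monomial minimal solution modulo `N`. -/
def minMonSize {N : ℕ} (k : ZMod N) (r : ℕ) : Prop :=
  0 < r ∧ isMonSol k r ∧ ∀ m, 0 < m → isMonSol k m → r ≤ m

open Matrix

section CommRing

variable {R : Type*} [CommRing R]

theorem Matrix.trace_eq_zero_of_det_eq_one_of_mul_self_eq_neg_one {A : Matrix (Fin 2) (Fin 2) R}
    (hdet : A.det = 1) (hA : A * A = -1) : A.trace = 0 := by
  have h00 := congrFun (congrFun hA 0) 0
  have h01 := congrFun (congrFun hA 0) 1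
  simp only [mul_apply, Fin.sum_univ_two, neg_apply, one_apply_eq, one_apply_ne zero_ne_one]
    at h00 h01
  rw [det_fin_two] at hdet
  rw [trace_fin_two]
  linear_combination A 1 1 * h00 - A 1 0 * h01 - A 0 0 * hdet

theorem Matrix.trace_pow_ne_zero_of_pow_eq_smul_one {n : Type*} [Fintype n] [DecidableEq n]
    {A : Matrix n n R} {p : ℕ} (hp : 0 < p) {u : R} (hu : IsUnit u) (hAp : A ^ p = u • 1)
    (htr : ∀ i < p, (A ^ i).trace ≠ 0) (s : ℕ) : (A ^ s).trace ≠ 0 := by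
  rw [← Nat.div_add_mod s p, pow_add, pow_mul, hAp, smul_pow, one_pow, smul_mul, one_mul,
    trace_smul, smul_eq_mul, Ne, (hu.pow _).mul_right_eq_zero]
  exact htr _ (Nat.mod_lt s hp)

theorem companion_sq (c : R) : !![c, -1; 1, 0] ^ 2 = !![c * c - 1, -c; c, -1] := by
  rw [sq, mul_fin_two]
  simp [sub_eq_add_neg]

theorem trace_companion_pow_ne_zero_of_mul_self_eq_one {c : R} (hc : c * c = 1) (h2 : (2 : R) ≠ 0)
    (s : ℕ) : (!![c, -1; 1, 0] ^ s).trace ≠ 0 := by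
  refine trace_pow_ne_zero_of_pow_eq_smul_one three_pos
    (IsUnit.of_mul_eq_one (-c) ((neg_mul_neg c c).trans hc)) ?_ ?_ s
  · ext i j
    rw [show 3 = 2 + 1 from rfl, pow_succ, companion_sq, mul_fin_two]
    fin_cases i <;> fin_cases j <;> simp <;> grind
  · have : Nontrivial R := ⟨⟨2, 0, h2⟩⟩
    intro i hi
    interval_cases i
    · simpa using h2
    · simpa using left_ne_zero_of_mul_eq_one hc
    · simp [companion_sq, hc]

theorem trace_companion_pow_ne_zero_of_mul_self_eq_zero {e : R} (he : e ≠ 0) (hee : e * e = 0)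
    (h2e : 2 * e = 0) (h2 : (2 : R) ≠ 0) (s : ℕ) : (!![e, -1; 1, 0] ^ s).trace ≠ 0 := by
  refine trace_pow_ne_zero_of_pow_eq_smul_one four_pos isUnit_one ?_ ?_ s
  · ext i j
    rw [show 4 = 2 * 2 from rfl, pow_mul, companion_sq, sq, mul_fin_two]
    fin_cases i <;> fin_cases j <;> simp <;> grind
  · intro i hi
    interval_cases i
    · simpa using h2
    · simpa using he
    · rw [companion_sq, trace_fin_two_of, hee]
      convert neg_ne_zero.mpr h2 using 1
      ring
    · rw [pow_succ, companion_sq, mul_fin_two, trace_fin_two_of]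
      convert he using 1
      linear_combination e * hee - 2 * h2e

end CommRing

theorem det_matE {N : ℕ} (a : ZMod N) : (matE a).det = 1 := by
  simp [matE, det_fin_two_of]

theorem matE_pow_map_castHom {m N : ℕ} (h : m ∣ N) (k : ℤ) (s : ℕ) :
    (matE (k : ZMod N) ^ s).map (ZMod.castHom h (ZMod m)) = matE (k : ZMod m) ^ s := by
  rw [← RingHom.mapMatrix_apply, map_pow, RingHom.mapMatrix_apply, matE, matE]
  congr 1
  ext i j
  fin_cases i <;> fin_cases j <;> simp [-ZMod.castHom_apply]

theorem trace_matE_pow_ne_zero_of_dvd {m N : ℕ} (h : m ∣ N) {k : ℤ} {s : ℕ}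
    (hm : (matE (k : ZMod m) ^ s).trace ≠ 0) : (matE (k : ZMod N) ^ s).trace ≠ 0 := by
  intro hN
  rw [← matE_pow_map_castHom h, ← AddMonoidHom.map_trace, hN, map_zero] at hm
  exact hm rfl

theorem trace_matE_pow_ne_zero_mod_four {k : ℤ} (hk : Odd k) (s : ℕ) :
    (matE (k : ZMod 4) ^ s).trace ≠ 0 := by
  refine trace_companion_pow_ne_zero_of_mul_self_eq_one ?_ (by decide) s
  obtain ⟨j, rfl⟩ := hk
  have h4 : (4 : ZMod 4) = 0 := rfl
  push_cast
  linear_combination (j * j + j) * h4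

theorem trace_matE_pow_ne_zero_mod_two_pow_succ {v : ℕ} (hv : 1 ≤ v) {k : ℤ}
    (hdvd : 2 ^ v ∣ k) (hndvd : ¬ 2 ^ (v + 1) ∣ k) (s : ℕ) :
    (matE (k : ZMod (2 ^ (v + 1))) ^ s).trace ≠ 0 := by
  have hzero (a : ℤ) : (a : ZMod (2 ^ (v + 1))) = 0 ↔ 2 ^ (v + 1) ∣ a := by
    rw [ZMod.intCast_zmod_eq_zero_iff_dvd]
    push_cast
    rfl
  refine trace_companion_pow_ne_zero_of_mul_self_eq_zero ((hzero k).not.mpr hndvd) ?_ ?_ ?_ s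
  · rw [← Int.cast_mul, hzero]
    refine (pow_dvd_pow 2 (by omega : v + 1 ≤ v + v)).trans ?_
    rw [pow_add]
    exact mul_dvd_mul hdvd hdvd
  · rw [← Int.cast_ofNat, ← Int.cast_mul, hzero, pow_succ']
    exact mul_dvd_mul_left 2 hdvd
  · rw [← Int.cast_ofNat, Ne, hzero]
    intro h2
    have := Int.le_of_dvd two_pos h2
    have : (2 : ℤ) ^ 2 ≤ 2 ^ (v + 1) := pow_le_pow_right₀ one_le_two (by omega)
    omega

theorem trace_matE_pow_ne_zero {n : ℕ} (hn : 2 ≤ n) {k : ℤ} (hk : (k : ZMod (2 ^ n)) ≠ 0)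
    (s : ℕ) : (matE (k : ZMod (2 ^ n)) ^ s).trace ≠ 0 := by
  rw [Ne, ZMod.intCast_zmod_eq_zero_iff_dvd, Nat.cast_pow, padicValInt_dvd_iff] at hk
  obtain ⟨hk0, hkn⟩ : k ≠ 0 ∧ padicValInt 2 k < n := by simpa only [not_or, not_le] using hk
  rcases Int.even_or_odd k with heven | hodd
  · have hv : 1 ≤ padicValInt 2 k := by
      simpa [hk0] using (padicValInt_dvd_iff (p := 2) 1 k).mp heven.two_dvd
    have hndvd : ¬ 2 ^ (padicValInt 2 k + 1) ∣ k := by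
      simpa [hk0] using (padicValInt_dvd_iff (p := 2) (padicValInt 2 k + 1) k).not
    exact trace_matE_pow_ne_zero_of_dvd (pow_dvd_pow 2 hkn)
      (trace_matE_pow_ne_zero_mod_two_pow_succ hv (padicValInt_dvd k) hndvd s)
  · exact trace_matE_pow_ne_zero_of_dvd (pow_dvd_pow 2 hn)
      (trace_matE_pow_ne_zero_mod_four hodd s)

theorem stmt5 (n : ℕ) (hn : 2 ≤ n) (k : ℤ) (hk : (k : ZMod (2 ^ n)) ≠ 0)
    (r : ℕ) (hr : minMonSize (k : ZMod (2 ^ n)) r) (hre : Even r) :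
    matE (k : ZMod (2 ^ n)) ^ r = 1 := by
  obtain ⟨s, rfl⟩ := hre
  refine hr.2.1.resolve_right fun hneg => trace_matE_pow_ne_zero hn hk s ?_
  refine trace_eq_zero_of_det_eq_one_of_mul_self_eq_neg_one ?_ ?_
  · rw [det_pow, det_matE, one_pow]
  · rwa [← pow_add]
end

section
/- Let k be an integer and n ≥ 2. Let r be the size of the k̄-monomial minimal solution modulo 2^n. If r > 2^{n-1}, then r ∈ {2^n, 3·2^{n-2}}. In particular, r ≤ 2^n. -/
/-!
Write `r_n` for the minimal size modulo `2^n`. Reducing modulo `2^n` shows `r_n ∣ r_{n+1}`,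
because the minimal size divides every solution size. Conversely, if `B ≡ ±1 (mod 2^n)` with
`n ≥ 1`, then `B = ±1 + A` where `A² ≡ 0` and `2A ≡ 0 (mod 2^(n+1))`, so `B² ≡ 1 (mod 2^(n+1))`;
hence `r_{n+1} ∣ 2 r_n`. So `r_{n+1} ∈ {r_n, 2 r_n}`, and the claim follows by induction from
`r_2 ≤ 4`, which is a finite check over `ℤ/4ℤ`.
-/

namespace ZMod

variable {M N : ℕ} (h : M ∣ N)

theorem exists_eq_mul_of_castHom_eq_zero {x : ZMod N} (hx : castHom h (ZMod M) x = 0) :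
    ∃ c : ZMod N, x = M * c := by
  rw [← intCast_zmod_cast x, map_intCast, intCast_zmod_eq_zero_iff_dvd] at hx
  obtain ⟨c, hc⟩ := hx
  exact ⟨c, by rw [← intCast_zmod_cast x, hc]; push_cast; rfl⟩

theorem mul_eq_zero_of_castHom_eq_zero (hN : N ∣ M * M) {x y : ZMod N}
    (hx : castHom h (ZMod M) x = 0) (hy : castHom h (ZMod M) y = 0) : x * y = 0 := by
  obtain ⟨c, rfl⟩ := exists_eq_mul_of_castHom_eq_zero h hx
  obtain ⟨d, rfl⟩ := exists_eq_mul_of_castHom_eq_zero h hy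
  rw [mul_mul_mul_comm, ← Nat.cast_mul, (natCast_eq_zero_iff _ _).2 hN, zero_mul]

theorem add_self_eq_zero_of_castHom_eq_zero (hN : N ∣ 2 * M) {x : ZMod N}
    (hx : castHom h (ZMod M) x = 0) : x + x = 0 := by
  obtain ⟨c, rfl⟩ := exists_eq_mul_of_castHom_eq_zero h hx
  rw [← two_mul, ← mul_assoc, ← Nat.cast_ofNat, ← Nat.cast_mul, (natCast_eq_zero_iff _ _).2 hN,
    zero_mul]

end ZMod

theorem matE_castHom {M N : ℕ} (h : M ∣ N) (k : ZMod N) :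
    (ZMod.castHom h (ZMod M)).mapMatrix (matE k) = matE (ZMod.castHom h (ZMod M) k) := by
  ext i j
  fin_cases i <;> fin_cases j <;> simp [matE, -ZMod.castHom_apply]

theorem matE_pow_castHom {M N : ℕ} (h : M ∣ N) (k : ZMod N) (m : ℕ) :
    (ZMod.castHom h (ZMod M)).mapMatrix (matE k ^ m) = matE (ZMod.castHom h (ZMod M) k) ^ m := by
  rw [map_pow, matE_castHom]

section isMonSol

variable {N : ℕ} {k : ZMod N}

theorem isMonSol.castHom {M : ℕ} (h : M ∣ N) {m : ℕ} (hs : isMonSol k m) :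
    isMonSol (ZMod.castHom h (ZMod M) k) m := by
  rcases hs with hs | hs
  · exact .inl (by rw [← matE_pow_castHom, hs, map_one])
  · exact .inr (by rw [← matE_pow_castHom, hs, map_neg, map_one])

theorem isMonSol.mul {a : ℕ} (ha : isMonSol k a) (q : ℕ) : isMonSol k (a * q) := by
  rw [isMonSol, pow_mul]
  rcases ha with ha | ha
  · exact .inl (by rw [ha, one_pow])
  · rw [ha]; exact neg_one_pow_eq_or _ q

theorem isMonSol.of_add {a b : ℕ} (ha : isMonSol k a) (hab : isMonSol k (a + b)) :
    isMonSol k b := by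
  unfold isMonSol at *
  rw [pow_add] at hab
  rcases ha with ha | ha <;> rw [ha] at hab
  · simpa only [one_mul] using hab
  · simpa only [neg_one_mul, neg_eq_iff_eq_neg, neg_neg, or_comm] using hab

theorem minMonSize.dvd {r m : ℕ} (hr : minMonSize k r) (hm : isMonSol k m) : r ∣ m := by
  obtain ⟨hr0, hrs, hmin⟩ := hr
  have hmod : isMonSol k (m % r) :=
    (hrs.mul (m / r)).of_add (by rwa [Nat.div_add_mod])
  by_contra hndvd
  have := hmin (m % r) (Nat.pos_of_ne_zero (mt Nat.dvd_of_mod_eq_zero hndvd)) hmod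
  exact absurd (Nat.mod_lt m hr0) (not_lt.2 this)

theorem exists_minMonSize {m : ℕ} (hm : 0 < m) (hs : isMonSol k m) : ∃ r, minMonSize k r := by
  classical
  have hex : ∃ m, 0 < m ∧ isMonSol k m := ⟨m, hm, hs⟩
  exact ⟨Nat.find hex, (Nat.find_spec hex).1, (Nat.find_spec hex).2,
    fun m hm hsm => Nat.find_min' hex ⟨hm, hsm⟩⟩

end isMonSol

theorem mul_self_eq_one_of_castHom_mapMatrix_eq {M N : ℕ} {ι : Type*} [Fintype ι] [DecidableEq ι]
    (h : M ∣ N) (hNM : N ∣ M * M) (hN2 : N ∣ 2 * M) {B u : Matrix ι ι (ZMod N)}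
    (hu : u = 1 ∨ u = -1)
    (hB : (ZMod.castHom h (ZMod M)).mapMatrix B = (ZMod.castHom h (ZMod M)).mapMatrix u) :
    B * B = 1 := by
  set A := B - u
  have hker : ∀ i j, ZMod.castHom h (ZMod M) (A i j) = 0 := fun i j => by
    simpa using congrFun₂ (show (ZMod.castHom h (ZMod M)).mapMatrix A = 0 by
      rw [map_sub, hB, sub_self]) i j
  have hAA : A * A = 0 := by
    ext i j
    simp only [Matrix.mul_apply, Matrix.zero_apply]
    exact Finset.sum_eq_zero fun l _ =>
      ZMod.mul_eq_zero_of_castHom_eq_zero h hNM (hker i l) (hker l j)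
  have hA2 : A + A = 0 := by
    ext i j
    exact ZMod.add_self_eq_zero_of_castHom_eq_zero h hN2 (hker i j)
  have hB' : B = u + A := (add_sub_cancel u B).symm
  clear_value A
  rw [hB']
  rcases hu with rfl | rfl
  · calc (1 + A) * (1 + A) = 1 + (A + A) + A * A := by noncomm_ring
      _ = 1 := by rw [hAA, hA2, add_zero, add_zero]
  · calc (-1 + A) * (-1 + A) = 1 - (A + A) + A * A := by noncomm_ring
      _ = 1 := by rw [hAA, hA2, sub_zero, add_zero]

theorem isMonSol.two_mul_of_castHom {M N : ℕ} (h : M ∣ N) (hNM : N ∣ M * M)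
    (hN2 : N ∣ 2 * M) {k : ZMod N} {m : ℕ} (hs : isMonSol (ZMod.castHom h (ZMod M) k) m) :
    isMonSol k (2 * m) := by
  refine .inl ?_
  rw [two_mul, pow_add]
  rcases hs with hs | hs
  · exact mul_self_eq_one_of_castHom_mapMatrix_eq h hNM hN2 (.inl rfl)
      (by rw [matE_pow_castHom, hs, map_one])
  · exact mul_self_eq_one_of_castHom_mapMatrix_eq h hNM hN2 (.inr rfl)
      (by rw [matE_pow_castHom, hs, map_neg, map_one])

theorem minMonSize.eq_or_eq_two_mul_of_castHom {M N : ℕ} (h : M ∣ N) (hNM : N ∣ M * M)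
    (hN2 : N ∣ 2 * M) {k : ZMod N} {r s : ℕ} (hr : minMonSize k r)
    (hs : minMonSize (ZMod.castHom h (ZMod M) k) s) : r = s ∨ r = 2 * s := by
  obtain ⟨t, rfl⟩ := hs.dvd (hr.2.1.castHom h)
  have ht : t ∣ 2 := (Nat.mul_dvd_mul_iff_left hs.1).1
    (by simpa [mul_comm] using hr.dvd (hs.2.1.two_mul_of_castHom h hNM hN2))
  rcases (Nat.dvd_prime Nat.prime_two).1 ht with rfl | rfl
  · exact .inl (mul_one s)
  · exact .inr (mul_comm s 2)

theorem minMonSize_le_four {k : ZMod (2 ^ 2)} {r : ℕ} (hr : minMonSize k r) : r ≤ 4 := by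
  have h34 : ∀ k : ZMod 4, isMonSol k 3 ∨ isMonSol k 4 := by
    unfold isMonSol; decide
  rcases h34 k with h | h
  · exact (hr.2.2 3 (by norm_num) h).trans (by norm_num)
  · exact hr.2.2 4 (by norm_num) h

theorem minMonSize_two_pow_add_two (p : ℕ) {k : ZMod (2 ^ (p + 2))} {r : ℕ}
    (hr : minMonSize k r) :
    (2 ^ (p + 1) < r → r = 2 ^ (p + 2) ∨ r = 3 * 2 ^ p) ∧ r ≤ 2 ^ (p + 2) := by
  induction p generalizing r with
  | zero =>
    have := minMonSize_le_four hr
    omega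
  | succ p ih =>
    have h : 2 ^ (p + 2) ∣ 2 ^ (p + 3) := pow_dvd_pow 2 (by omega)
    have hNM : 2 ^ (p + 3) ∣ 2 ^ (p + 2) * 2 ^ (p + 2) := by
      rw [← pow_add]; exact pow_dvd_pow 2 (by omega)
    have hN2 : 2 ^ (p + 3) ∣ 2 * 2 ^ (p + 2) := by rw [← pow_succ']
    obtain ⟨s, hs⟩ := exists_minMonSize hr.1 (hr.2.1.castHom h)
    obtain ⟨hs_big, hs_le⟩ := ih hs
    have hrs := hr.eq_or_eq_two_mul_of_castHom h hNM hN2 hs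
    have e₁ : 2 ^ (p + 1) = 2 * 2 ^ p := by ring
    have e₂ : 2 ^ (p + 2) = 4 * 2 ^ p := by ring
    have e₃ : 2 ^ (p + 1 + 1) = 4 * 2 ^ p := by ring
    have e₄ : 2 ^ (p + 1 + 2) = 8 * 2 ^ p := by ring
    refine ⟨fun hbig => ?_, by omega⟩
    have := hs_big (by omega)
    omega

theorem stmt7 (k : ℤ) (n : ℕ) (hn : 2 ≤ n)
    (r : ℕ) (hr : minMonSize (k : ZMod (2 ^ n)) r) :
    (2 ^ (n - 1) < r → r = 2 ^ n ∨ r = 3 * 2 ^ (n - 2)) ∧ r ≤ 2 ^ n := by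
  obtain ⟨p, rfl⟩ : ∃ p, n = p + 2 := ⟨n - 2, by omega⟩
  simpa only [Nat.add_sub_cancel, show p + 2 - 1 = p + 1 by omega]
    using minMonSize_two_pow_add_two p hr
end

section
/- Let N = 2u with u ≥ 3 odd, and let k be an integer. Let l₁ be the size of the k-monomial minimal solution modulo 2, h the size modulo u, and l the size modulo N. Then l = lcm(l₁, h). Moreover, if k is even then l ≤ N, and if k is odd then l ≤ 3N. -/
open Polynomial

theorem one_add_pow_of_mul_self_eq_zero {R : Type*} [Semiring R] {c : R} (hc : c * c = 0)
    (n : ℕ) : (1 + c) ^ n = 1 + n • c := by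
  induction n with
  | zero => simp
  | succ n ih =>
    rw [pow_succ, ih, add_mul, one_mul, mul_add, mul_one, smul_mul_assoc, hc, smul_zero,
      add_zero, succ_nsmul]
    abel

theorem exists_pow_two_mul_eq_one_of_pow_eq_or {M : Type*} [CommMonoid M] {p : ℕ} (hp : Odd p)
    (hp1 : p ≠ 1) {x y : M} (hxy : x * y = 1) (hx : x ^ p = x ∨ x ^ p = y) :
    ∃ S, 0 < S ∧ S ≤ p ∧ x ^ (2 * S) = 1 ∧ y ^ (2 * S) = 1 := by
  obtain ⟨r, rfl⟩ := hp
  have hy : ∀ n, x ^ n = 1 → y ^ n = 1 := fun n hn =>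
    calc y ^ n = x ^ n * y ^ n := by rw [hn, one_mul]
      _ = 1 := by rw [← mul_pow, hxy, one_pow]
  suffices ∃ S, 0 < S ∧ S ≤ 2 * r + 1 ∧ x ^ (2 * S) = 1 from
    this.imp fun S ⟨h0, hle, hS⟩ => ⟨h0, hle, hS, hy _ hS⟩
  rcases hx with hx | hx
  · refine ⟨r, by omega, by omega, ?_⟩
    calc x ^ (2 * r) = x ^ (2 * r + 1) * y := by rw [pow_succ, mul_assoc, hxy, mul_one]
      _ = 1 := by rw [hx, hxy]
  · refine ⟨r + 1, by omega, by omega, ?_⟩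
    rw [mul_add, mul_one, pow_succ, hx, mul_comm, hxy]

theorem X_sub_C_mul_X_sub_C_dvd_X_pow_sub_one {R : Type*} [CommRing R] {x y : R}
    (hxy : IsUnit (x - y)) {n : ℕ} (hx : x ^ n = 1) (hy : y ^ n = 1) :
    (X - C x) * (X - C y) ∣ X ^ n - 1 :=
  (isCoprime_X_sub_C_of_isUnit_sub hxy).mul_dvd (dvd_iff_isRoot.2 (by simp [hx]))
    (dvd_iff_isRoot.2 (by simp [hy]))

theorem X_sub_C_sq_dvd_X_pow_two_mul_sub_one {R : Type*} [CommRing R] (p : ℕ) [Fact p.Prime]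
    [CharP R p] {x : R} (hx : x ^ 2 = 1) : (X - C x) ^ 2 ∣ X ^ (2 * p) - 1 := by
  have hroot : X - C x ∣ X ^ 2 - 1 := dvd_iff_isRoot.2 (by simp [hx])
  rw [pow_mul, ← one_pow p, ← sub_pow_char]
  exact (pow_dvd_pow_of_dvd hroot 2).trans (pow_dvd_pow _ (Fact.out : p.Prime).two_le)

theorem isSquare_algebraMap_galoisField {p : ℕ} [Fact p.Prime] (hp : p ≠ 2) (b : ZMod p) :
    IsSquare (algebraMap (ZMod p) (GaloisField p 2) b) := by
  rcases eq_or_ne b 0 with rfl | hb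
  · simp
  let : Fintype (GaloisField p 2) := Fintype.ofFinite _
  have hchar : ringChar (GaloisField p 2) ≠ 2 := by rwa [ringChar.eq (GaloisField p 2) p]
  rw [FiniteField.isSquare_iff hchar ((_root_.map_ne_zero _).2 hb)]
  obtain ⟨r, hr⟩ := (Fact.out : p.Prime).odd_of_ne_two hp
  have hcard : Fintype.card (GaloisField p 2) / 2 = 2 * r * (r + 1) := by
    rw [← Nat.card_eq_fintype_card, GaloisField.card _ _ two_ne_zero, hr]
    have : (2 * r + 1) ^ 2 = 2 * (2 * r * (r + 1)) + 1 := by ring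
    omega
  have hb1 : b ^ (2 * r) = 1 := by
    simpa [hr] using ZMod.pow_card_sub_one_eq_one hb
  rw [hcard, pow_mul, ← map_pow, hb1, map_one, one_pow]

theorem exists_X_sq_sub_C_mul_X_add_one_dvd_X_pow_sub_one {p : ℕ} [Fact p.Prime] (hp : p ≠ 2) (a : ZMod p) :
    ∃ S, 0 < S ∧ S ≤ p ∧ (X ^ 2 - C a * X + 1 : (ZMod p)[X]) ∣ X ^ (2 * S) - 1 := by
  let ι := algebraMap (ZMod p) (GaloisField p 2)
  have : NeZero (2 : GaloisField p 2) := ⟨Ring.two_ne_zero (by rwa [ringChar.eq _ p])⟩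
  obtain ⟨x, hx⟩ : ∃ x, 1 * (x * x) + -ι a * x + 1 = 0 := by
    refine exists_quadratic_eq_zero one_ne_zero ?_
    obtain ⟨s, hs⟩ := isSquare_algebraMap_galoisField hp (a ^ 2 - 4)
    exact ⟨s, by rw [discrim, ← hs]; simp only [ι, map_sub, map_pow, map_ofNat]; ring⟩
  set y := ι a - x with hy
  have hsum : x + y = ι a := by rw [hy]; ring
  have hxy : x * y = 1 := by rw [hy]; linear_combination -hx
  have hfactor : (X ^ 2 - C a * X + 1).map ι = (X - C x) * (X - C y) := by
    have : (X - C x) * (X - C y) = X ^ 2 - C (x + y) * X + C (x * y) := by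
      simp only [C_add, C_mul]; ring
    rw [this, hxy, hsum, C_1]
    simp
  have hfrob : x ^ p = x ∨ x ^ p = y := by
    have hroot := congrArg (frobenius (GaloisField p 2) p) hx
    simp only [map_add, map_mul, map_neg, map_one, map_zero, frobenius_def, ← map_pow,
      ZMod.pow_card] at hroot
    have : (x ^ p - x) * (x ^ p - y) = 0 := by linear_combination hroot - x ^ p * hsum + hxy
    rcases mul_eq_zero.1 this with h | h
    · exact .inl (sub_eq_zero.1 h)
    · exact .inr (sub_eq_zero.1 h)
  simp_rw [← map_dvd_map' ι, hfactor, Polynomial.map_sub, Polynomial.map_pow, map_X,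
    Polynomial.map_one]
  rcases eq_or_ne x y with hxy' | hxy'
  · refine ⟨p, (Fact.out : p.Prime).pos, le_rfl, ?_⟩
    rw [← hxy', ← sq]
    exact X_sub_C_sq_dvd_X_pow_two_mul_sub_one p (by simpa [sq, ← hxy'] using hxy)
  · obtain ⟨S, hS0, hSp, hxS, hyS⟩ := exists_pow_two_mul_eq_one_of_pow_eq_or
      ((Fact.out : p.Prime).odd_of_ne_two hp) (Fact.out : p.Prime).one_lt.ne' hxy hfrob
    exact ⟨S, hS0, hSp,
      X_sub_C_mul_X_sub_C_dvd_X_pow_sub_one (sub_ne_zero.2 hxy').isUnit hxS hyS⟩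

theorem charpoly_matE {N : ℕ} [Nontrivial (ZMod N)] (a : ZMod N) :
    (matE a).charpoly = X ^ 2 - C a * X + 1 := by
  simp [Matrix.charpoly_fin_two, matE, Matrix.trace_fin_two, Matrix.det_fin_two]

theorem exists_matE_pow_eq_one_of_prime {p : ℕ} [Fact p.Prime] (hp : p ≠ 2) (a : ZMod p) :
    ∃ S, 0 < S ∧ S ≤ p ∧ matE a ^ (2 * S) = 1 := by
  obtain ⟨S, hS0, hSp, hdvd⟩ := exists_X_sq_sub_C_mul_X_add_one_dvd_X_pow_sub_one hp a
  have h := aeval_eq_zero_of_dvd_aeval_eq_zero hdvd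
    (charpoly_matE a ▸ Matrix.aeval_self_charpoly (matE a))
  rw [map_sub, map_pow, aeval_X, map_one, sub_eq_zero] at h
  exact ⟨S, hS0, hSp, h⟩

theorem mapMatrix_castHom_matE_pow {d n : ℕ} (h : d ∣ n) (k : ℤ) (m : ℕ) :
    (ZMod.castHom h (ZMod d)).mapMatrix (matE (k : ZMod n) ^ m) = matE (k : ZMod d) ^ m := by
  rw [map_pow]
  congr 1
  ext i j
  fin_cases i <;> fin_cases j <;> simp [matE, -ZMod.castHom_apply]

theorem ZMod.exists_eq_mul_of_castHom_eq_zero_s10 {d n : ℕ} {x : ZMod (d * n)}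
    (hx : ZMod.castHom (dvd_mul_right d n) (ZMod d) x = 0) : ∃ y, x = d * y := by
  rw [← ZMod.intCast_zmod_cast x, map_intCast, ZMod.intCast_zmod_eq_zero_iff_dvd] at *
  obtain ⟨z, hz⟩ := hx
  exact ⟨z, by rw [hz]; push_cast; rfl⟩

theorem ZMod.eq_zero_of_castHom_eq_zero {m n : ℕ} (hmn : m.Coprime n) {x : ZMod (m * n)}
    (hm : ZMod.castHom (dvd_mul_right m n) (ZMod m) x = 0)
    (hn : ZMod.castHom (dvd_mul_left n m) (ZMod n) x = 0) : x = 0 := by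
  rw [← ZMod.intCast_zmod_cast x, map_intCast, ZMod.intCast_zmod_eq_zero_iff_dvd] at *
  push_cast
  exact (Nat.isCoprime_iff_coprime.2 hmn).mul_dvd hm hn

theorem Matrix.pow_eq_one_of_mapMatrix_castHom_eq_one {ι : Type*} [Fintype ι] [DecidableEq ι]
    {d p : ℕ} (hp : p ∣ d) {M : Matrix ι ι (ZMod (d * p))}
    (hM : (ZMod.castHom (dvd_mul_right d p) (ZMod d)).mapMatrix M = 1) : M ^ p = 1 := by
  have hker : ∀ i j, ∃ y, (M - 1) i j = d * y := fun i j => by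
    refine ZMod.exists_eq_mul_of_castHom_eq_zero_s10 ?_
    have h0 : (ZMod.castHom (dvd_mul_right d p) (ZMod d)).mapMatrix (M - 1) = 0 := by
      rw [map_sub, hM, map_one, sub_self]
    exact congrFun (congrFun h0 i) j
  choose y hy using hker
  have hM1 : M = 1 + (d : ZMod (d * p)) • Matrix.of y := by
    rw [← sub_eq_iff_eq_add']
    ext i j
    simp [hy]
  have hdd : (d : ZMod (d * p)) * d = 0 := by
    exact_mod_cast (ZMod.natCast_eq_zero_iff _ _).2 (mul_dvd_mul_left d hp)
  have hpd : (p : ZMod (d * p)) * d = 0 := by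
    rw [← Nat.cast_mul, mul_comm, ZMod.natCast_self]
  rw [hM1, one_add_pow_of_mul_self_eq_zero (by rw [smul_mul_smul, hdd, zero_smul]),
    ← Nat.cast_smul_eq_nsmul (ZMod (d * p)), smul_smul, hpd, zero_smul, add_zero]

theorem Matrix.eq_one_of_mapMatrix_castHom_eq_one {ι : Type*} [Fintype ι] [DecidableEq ι]
    {m n : ℕ} (hmn : m.Coprime n) {M : Matrix ι ι (ZMod (m * n))}
    (hm : (ZMod.castHom (dvd_mul_right m n) (ZMod m)).mapMatrix M = 1)
    (hn : (ZMod.castHom (dvd_mul_left n m) (ZMod n)).mapMatrix M = 1) : M = 1 := by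
  rw [← sub_eq_zero]
  ext i j
  have hm0 : (ZMod.castHom (dvd_mul_right m n) (ZMod m)).mapMatrix (M - 1) = 0 := by
    rw [map_sub, hm, map_one, sub_self]
  have hn0 : (ZMod.castHom (dvd_mul_left n m) (ZMod n)).mapMatrix (M - 1) = 0 := by
    rw [map_sub, hn, map_one, sub_self]
  exact ZMod.eq_zero_of_castHom_eq_zero hmn (congrFun (congrFun hm0 i) j)
    (congrFun (congrFun hn0 i) j)

theorem exists_matE_pow_eq_one_of_prime_pow {p : ℕ} (hp : p.Prime) (hp2 : p ≠ 2) (k : ℤ)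
    (e : ℕ) : ∃ S, 0 < S ∧ S ≤ p ^ (e + 1) ∧ matE (k : ZMod (p ^ (e + 1))) ^ (2 * S) = 1 := by
  induction e with
  | zero =>
    have := Fact.mk hp
    rw [zero_add, pow_one]
    exact exists_matE_pow_eq_one_of_prime hp2 (k : ZMod p)
  | succ e ih =>
    obtain ⟨S, hS0, hSle, hS⟩ := ih
    rw [pow_succ p (e + 1)]
    refine ⟨S * p, Nat.mul_pos hS0 hp.pos, Nat.mul_le_mul_right p hSle, ?_⟩
    rw [← mul_assoc, pow_mul]
    exact Matrix.pow_eq_one_of_mapMatrix_castHom_eq_one (dvd_pow_self p e.succ_ne_zero)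
      (by rw [mapMatrix_castHom_matE_pow, hS])

theorem exists_matE_pow_eq_one (k : ℤ) {u : ℕ} (hu : Odd u) :
    ∃ S, 0 < S ∧ S ≤ u ∧ matE (k : ZMod u) ^ (2 * S) = 1 := by
  induction u using Nat.recOnPosPrimePosCoprime with
  | prime_pow p n hp hn =>
    have hp2 : p ≠ 2 := by
      rintro rfl
      exact Nat.not_even_iff_odd.2 hu (Nat.even_pow.2 ⟨even_two, hn.ne'⟩)
    obtain ⟨e, rfl⟩ : ∃ e, n = e + 1 := ⟨n - 1, by omega⟩
    exact exists_matE_pow_eq_one_of_prime_pow hp hp2 k e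
  | zero => exact absurd hu (by decide)
  | one => exact ⟨1, one_pos, le_rfl, Subsingleton.elim _ _⟩
  | coprime a b _ _ hab iha ihb =>
    obtain ⟨Sa, hSa0, hSale, hSa⟩ := iha (Nat.odd_mul.1 hu).1
    obtain ⟨Sb, hSb0, hSble, hSb⟩ := ihb (Nat.odd_mul.1 hu).2
    refine ⟨Sa * Sb, Nat.mul_pos hSa0 hSb0, Nat.mul_le_mul hSale hSble,
      Matrix.eq_one_of_mapMatrix_castHom_eq_one hab ?_ ?_⟩
    · rw [mapMatrix_castHom_matE_pow, ← mul_assoc, pow_mul, hSa, one_pow]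
    · rw [mapMatrix_castHom_matE_pow, mul_comm Sa, ← mul_assoc, pow_mul, hSb, one_pow]

theorem isMonSol_mul {N : ℕ} {k : ZMod N} {r : ℕ} (hr : isMonSol k r) (n : ℕ) :
    isMonSol k (r * n) := by
  rw [isMonSol, pow_mul]
  rcases hr with hr | hr <;> rw [hr]
  · exact .inl (one_pow n)
  · exact neg_one_pow_eq_or _ n

theorem minMonSize.dvd_of_isMonSol {N : ℕ} {k : ZMod N} {r m : ℕ} (hr : minMonSize k r)
    (hm : isMonSol k m) : r ∣ m := by
  obtain ⟨hr0, hrsol, hrmin⟩ := hr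
  -- `matE k ^ (m % r) = ± matE k ^ m` because `matE k ^ (r * (m / r)) = ±1`
  have hmod : isMonSol k (m % r) := by
    have hq := isMonSol_mul hrsol (m / r)
    unfold isMonSol at hq hm ⊢
    rw [← Nat.div_add_mod m r, pow_add] at hm
    rcases hq with hq | hq <;> rw [hq] at hm
    · rwa [one_mul] at hm
    · rw [neg_one_mul, neg_eq_iff_eq_neg, neg_eq_iff_eq_neg, neg_neg] at hm
      exact hm.symm
  by_contra hdvd
  have := hrmin _ (Nat.pos_of_ne_zero (mt Nat.dvd_of_mod_eq_zero hdvd)) hmod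
  exact absurd (Nat.mod_lt m hr0) (not_lt.2 this)

theorem minMonSize.isMonSol_iff_dvd {N : ℕ} {k : ZMod N} {r m : ℕ} (hr : minMonSize k r) :
    isMonSol k m ↔ r ∣ m :=
  ⟨hr.dvd_of_isMonSol, fun ⟨n, hn⟩ => hn ▸ isMonSol_mul hr.2.1 n⟩

theorem isMonSol_of_dvd {d n : ℕ} (h : d ∣ n) {k : ℤ} {m : ℕ} (hm : isMonSol (k : ZMod n) m) :
    isMonSol (k : ZMod d) m := by
  rw [isMonSol, ← mapMatrix_castHom_matE_pow h]
  rcases hm with hm | hm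
  · exact .inl (by rw [hm, map_one])
  · exact .inr (by rw [hm, map_neg, map_one])

theorem isMonSol_two_mul_iff {u : ℕ} (hu : Odd u) (k : ℤ) (m : ℕ) :
    isMonSol (k : ZMod (2 * u)) m ↔ isMonSol (k : ZMod 2) m ∧ isMonSol (k : ZMod u) m := by
  refine ⟨fun hm => ⟨isMonSol_of_dvd (dvd_mul_right 2 u) hm,
    isMonSol_of_dvd (dvd_mul_left u 2) hm⟩, fun ⟨h2, hu'⟩ => ?_⟩
  have hco : Nat.Coprime 2 u := Nat.coprime_two_left.2 hu
  -- modulo 2 the signs `±1` coincide, so the sign modulo `u` is the sign modulo `2 * u`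
  have h2' : matE (k : ZMod 2) ^ m = 1 := h2.elim id fun h => h.trans (by decide)
  rcases hu' with hu' | hu'
  · refine .inl (Matrix.eq_one_of_mapMatrix_castHom_eq_one hco ?_ ?_) <;>
      rw [mapMatrix_castHom_matE_pow] <;> assumption
  · refine .inr (neg_eq_iff_eq_neg.1 (Matrix.eq_one_of_mapMatrix_castHom_eq_one hco ?_ ?_))
    · rw [map_neg, mapMatrix_castHom_matE_pow, h2']; decide
    · rw [map_neg, mapMatrix_castHom_matE_pow, hu', neg_neg]

theorem isMonSol_two_of_even {k : ℤ} (hk : Even k) : isMonSol (k : ZMod 2) 2 := by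
  rw [ZMod.intCast_eq_zero_iff_even.2 hk]; exact .inl (by decide)

theorem isMonSol_three_of_odd {k : ℤ} (hk : Odd k) : isMonSol (k : ZMod 2) 3 := by
  rw [ZMod.intCast_eq_one_iff_odd.2 hk]; exact .inl (by decide)

theorem stmt10_general (u : ℕ) (hodd : Odd u) (k : ℤ)
    (l₁ h l : ℕ)
    (hl₁ : minMonSize (k : ZMod 2) l₁)
    (hh : minMonSize (k : ZMod u) h)
    (hl : minMonSize (k : ZMod (2 * u)) l) :
    l = Nat.lcm l₁ h ∧ (Even k → l ≤ 2 * u) ∧ (Odd k → l ≤ 3 * (2 * u)) := by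
  have hl_dvd : ∀ m, l ∣ m ↔ Nat.lcm l₁ h ∣ m := fun m => by
    rw [← hl.isMonSol_iff_dvd, isMonSol_two_mul_iff hodd, hl₁.isMonSol_iff_dvd,
      hh.isMonSol_iff_dvd, Nat.lcm_dvd_iff]
  have hl_eq : l = Nat.lcm l₁ h := Nat.dvd_antisymm ((hl_dvd _).2 dvd_rfl) ((hl_dvd _).1 dvd_rfl)
  obtain ⟨S, hS0, hSu, hS⟩ := exists_matE_pow_eq_one k hodd
  have hhS : h ∣ 2 * S := hh.isMonSol_iff_dvd.1 (.inl hS)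
  refine ⟨hl_eq, fun hk => ?_, fun hk => ?_⟩
  · have hl₁2 : l₁ ∣ 2 := hl₁.isMonSol_iff_dvd.1 (isMonSol_two_of_even hk)
    have : l ∣ 2 * S := (hl_dvd _).2 (Nat.lcm_dvd (hl₁2.trans (dvd_mul_right 2 S)) hhS)
    have := Nat.le_of_dvd (by omega) this
    omega
  · have hl₁3 : l₁ ∣ 3 := hl₁.isMonSol_iff_dvd.1 (isMonSol_three_of_odd hk)
    have : l ∣ 3 * (2 * S) :=
      (hl_dvd _).2 (Nat.lcm_dvd (hl₁3.trans (dvd_mul_right 3 _)) (hhS.trans (dvd_mul_left _ 3)))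
    have := Nat.le_of_dvd (by omega) this
    omega

theorem stmt10 (u : ℕ) (hu : 3 ≤ u) (hodd : Odd u) (k : ℤ)
    (l₁ h l : ℕ)
    (hl₁ : minMonSize (k : ZMod 2) l₁)
    (hh : minMonSize (k : ZMod u) h)
    (hl : minMonSize (k : ZMod (2 * u)) l) :
    l = Nat.lcm l₁ h ∧ (Even k → l ≤ 2 * u) ∧ (Odd k → l ≤ 3 * (2 * u)) :=
  stmt10_general u hodd k l₁ h l hl₁ hh hl
end

section
/- Let p be an odd prime with p ≡ 2 (mod 3), let N = 3p, and let k = p - 2. Then the size of the k̄-monomial minimal solution modulo N is exactly 4p. -/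
/-!
By the Chinese remainder theorem it suffices to work modulo `3` and modulo `p`.
Since `p ≡ 2 (mod 3)`, `k ≡ 0 (mod 3)`, and `matE 0` has order `4` with square `-1`.
Modulo `p`, `k ≡ -2` and `matE (-2) = -(1 + U)` with `U = !![1, 1; -1, -1]` and `U ^ 2 = 0`,
so `matE (-2) ^ m = (-1) ^ m (1 + m U)` is scalar exactly when `p ∣ m`, with sign `(-1) ^ m`.
Hence `matE k ^ m = -1` would force `m ≡ 2 (mod 4)` and `m` odd, while `matE k ^ m = 1`
exactly when `4 ∣ m` and `p ∣ m`, i.e. when `4 * p ∣ m`.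
-/

theorem ZMod.eq_zero_of_castHom_eq_zero_s14 {a b : ℕ} (h : a.Coprime b) {x : ZMod (a * b)}
    (ha : castHom (dvd_mul_right a b) (ZMod a) x = 0)
    (hb : castHom (dvd_mul_left b a) (ZMod b) x = 0) : x = 0 := by
  rw [← intCast_zmod_cast x] at ha hb ⊢
  rw [map_intCast, intCast_zmod_eq_zero_iff_dvd] at ha hb
  rw [intCast_zmod_eq_zero_iff_dvd, Nat.cast_mul]
  exact (Nat.isCoprime_iff_coprime.mpr h).mul_dvd ha hb

theorem Matrix.eq_of_mapMatrix_castHom_eq {ι : Type*} [Fintype ι] [DecidableEq ι]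
    {a b : ℕ} (h : a.Coprime b) {M M' : Matrix ι ι (ZMod (a * b))}
    (ha : (ZMod.castHom (dvd_mul_right a b) (ZMod a)).mapMatrix M =
      (ZMod.castHom (dvd_mul_right a b) (ZMod a)).mapMatrix M')
    (hb : (ZMod.castHom (dvd_mul_left b a) (ZMod b)).mapMatrix M =
      (ZMod.castHom (dvd_mul_left b a) (ZMod b)).mapMatrix M') :
    M = M' := by
  ext i j
  refine sub_eq_zero.mp (ZMod.eq_zero_of_castHom_eq_zero_s14 h ?_ ?_)
  · rw [map_sub, sub_eq_zero]
    exact congr_fun₂ ha i j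
  · rw [map_sub, sub_eq_zero]
    exact congr_fun₂ hb i j

theorem mapMatrix_matE {m n : ℕ} (f : ZMod m →+* ZMod n) (a : ZMod m) :
    f.mapMatrix (matE a) = matE (f a) := by
  ext i j
  fin_cases i <;> fin_cases j <;> simp [matE]

theorem matE_zero_pow_mod_four (m : ℕ) :
    matE (0 : ZMod 3) ^ m = matE (0 : ZMod 3) ^ (m % 4) := by
  have h4 : matE (0 : ZMod 3) ^ 4 = 1 := by decide
  conv_lhs => rw [← Nat.div_add_mod m 4, pow_add, pow_mul, h4, one_pow, one_mul]

theorem matE_zero_pow_eq_one_iff {m : ℕ} : matE (0 : ZMod 3) ^ m = 1 ↔ m % 4 = 0 := by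
  rw [matE_zero_pow_mod_four]
  have : m % 4 < 4 := Nat.mod_lt m (by norm_num)
  interval_cases m % 4 <;> decide

theorem matE_zero_pow_eq_neg_one_iff {m : ℕ} : matE (0 : ZMod 3) ^ m = -1 ↔ m % 4 = 2 := by
  rw [matE_zero_pow_mod_four]
  have : m % 4 < 4 := Nat.mod_lt m (by norm_num)
  interval_cases m % 4 <;> decide

theorem matE_neg_two_pow {n : ℕ} (m : ℕ) :
    matE (-2 : ZMod n) ^ m = (-1 : ZMod n) ^ m • !![1 + (m : ZMod n), m; -m, 1 - m] := by
  induction m with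
  | zero => simp [Matrix.one_fin_two]
  | succ m ih =>
    rw [pow_succ, ih, matE, Matrix.smul_mul, Matrix.mul_fin_two, pow_succ, mul_smul, neg_one_smul]
    congr 1
    simp only [Matrix.neg_of, Matrix.neg_cons, Matrix.neg_empty, Nat.cast_succ]
    ring_nf

theorem matE_neg_two_pow_eq_smul_one_iff {n m : ℕ} {c : ZMod n} :
    matE (-2 : ZMod n) ^ m = c • 1 ↔ (m : ZMod n) = 0 ∧ (-1) ^ m = c := by
  rw [matE_neg_two_pow]
  constructor
  · intro h
    have hm : (m : ZMod n) = 0 := by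
      simpa [((isUnit_neg_one (α := ZMod n)).pow m).mul_right_eq_zero] using congr_fun₂ h 0 1
    refine ⟨hm, ?_⟩
    simpa [hm] using congr_fun₂ h 0 0
  · rintro ⟨hm, rfl⟩
    rw [hm, Matrix.one_fin_two]
    simp

theorem matE_neg_two_pow_eq_one_iff {n m : ℕ} :
    matE (-2 : ZMod n) ^ m = 1 ↔ (m : ZMod n) = 0 ∧ (-1 : ZMod n) ^ m = 1 := by
  simpa using matE_neg_two_pow_eq_smul_one_iff (c := (1 : ZMod n))

theorem matE_neg_two_pow_eq_neg_one_iff {n m : ℕ} :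
    matE (-2 : ZMod n) ^ m = -1 ↔ (m : ZMod n) = 0 ∧ (-1 : ZMod n) ^ m = -1 := by
  simpa using matE_neg_two_pow_eq_smul_one_iff (c := (-1 : ZMod n))

theorem stmt14_general (p : ℕ) (hodd : Odd p) (hp3 : p % 3 = 2) :
    minMonSize (((p : ℤ) - 2 : ℤ) : ZMod (3 * p)) (4 * p) := by
  have hp2 : 2 < p := by obtain ⟨t, rfl⟩ := hodd; omega
  have : Fact (2 < p) := ⟨hp2⟩
  have hcop3 : Nat.Coprime 3 p := Nat.prime_three.coprime_iff_not_dvd.mpr (by omega)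
  have hcop4 : Nat.Coprime 4 p := hodd.coprime_two_left.pow_left 2
  set k : ZMod (3 * p) := (((p : ℤ) - 2 : ℤ) : ZMod (3 * p)) with hk
  set π₃ := ZMod.castHom (dvd_mul_right 3 p) (ZMod 3)
  set πₚ := ZMod.castHom (dvd_mul_left p 3) (ZMod p)
  have hk₃ : π₃ k = 0 := by
    rw [hk, map_intCast]
    push_cast
    rw [← ZMod.natCast_mod p 3, hp3]
    decide
  have hkₚ : πₚ k = -2 := by
    rw [hk, map_intCast]
    push_cast
    rw [ZMod.natCast_self, zero_sub]
  have pow₃ (m : ℕ) : π₃.mapMatrix (matE k ^ m) = matE 0 ^ m := by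
    rw [map_pow, mapMatrix_matE, hk₃]
  have powₚ (m : ℕ) : πₚ.mapMatrix (matE k ^ m) = matE (-2) ^ m := by
    rw [map_pow, mapMatrix_matE, hkₚ]
  refine ⟨by omega, Or.inl ?_, ?_⟩
  · apply Matrix.eq_of_mapMatrix_castHom_eq hcop3
    · rw [pow₃, map_one, matE_zero_pow_eq_one_iff]
      omega
    · rw [powₚ, map_one, matE_neg_two_pow_eq_one_iff]
      exact ⟨by simp, Even.neg_one_pow ⟨2 * p, by ring⟩⟩
  · rintro m hm (h | h)
    · have h4 : m % 4 = 0 := matE_zero_pow_eq_one_iff.mp (by rw [← pow₃, h, map_one])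
      have hpm : (m : ZMod p) = 0 :=
        (matE_neg_two_pow_eq_one_iff.mp (by rw [← powₚ, h, map_one])).1
      exact Nat.le_of_dvd hm (hcop4.mul_dvd_of_dvd_of_dvd (Nat.dvd_of_mod_eq_zero h4)
        ((ZMod.natCast_eq_zero_iff m p).mp hpm))
    · have h4 : m % 4 = 2 := matE_zero_pow_eq_neg_one_iff.mp (by rw [← pow₃, h, map_neg, map_one])
      have hsign : (-1 : ZMod p) ^ m = -1 :=
        (matE_neg_two_pow_eq_neg_one_iff.mp (by rw [← powₚ, h, map_neg, map_one])).2
      have hm_odd := (neg_one_pow_eq_neg_one_iff_odd ZMod.neg_one_ne_one).mp hsign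
      exact absurd (Nat.odd_iff.mp hm_odd) (by omega)

theorem stmt14 (p : ℕ) (hp : p.Prime) (hodd : Odd p) (hp3 : p % 3 = 2) :
    minMonSize (((p : ℤ) - 2 : ℤ) : ZMod (3 * p)) (4 * p) :=
  stmt14_general p hodd hp3
end

section
/- There is no constant K ≥ 1 such that for every N ≥ 2 all irreducible solutions of the equation M_n(a₁,...,aₙ) = ±Id over ℤ/Nℤ have size at most N + K. -/
/-- `M_n(a₁,…,aₙ)` for a tuple given as a list. -/
def Mlist {N : ℕ} (l : List (ZMod N)) : Matrix (Fin 2) (Fin 2) (ZMod N) :=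
  (l.map matE).reverse.prod

/-- A tuple is a solution of `(E_N)` if its matrix equals `±Id`. -/
def IsSolL {N : ℕ} (l : List (ZMod N)) : Prop := Mlist l = 1 ∨ Mlist l = -1

/-- The sum `⊕` of two tuples. -/
def oplus {N : ℕ} (a b : List (ZMod N)) : List (ZMod N) :=
  (a.head?.getD 0 + b.getLast?.getD 0) ::
    (a.tail.dropLast ++ ((a.getLast?.getD 0 + b.head?.getD 0) :: b.tail.dropLast))

/-- Equivalence: cyclic permutation of the tuple or of its reversal. -/
def EquivL {N : ℕ} (a b : List (ZMod N)) : Prop :=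
  (∃ i, b = a.rotate i) ∨ (∃ i, b = a.reverse.rotate i)

/-- A solution is reducible if it is equivalent to a sum `a ⊕ b` with `b` a
solution of `(E_N)` and both sizes at least 3. -/
def Reducible {N : ℕ} (c : List (ZMod N)) : Prop :=
  ∃ a b : List (ZMod N), 3 ≤ a.length ∧ 3 ≤ b.length ∧ IsSolL b ∧ EquivL c (oplus a b)

section ChineseRemainder

variable {m n : ℕ}

theorem ZMod.eq_of_cast_eq_of_coprime (h : m.Coprime n) {x y : ZMod (m * n)}
    (hm : (x.cast : ZMod m) = y.cast) (hn : (x.cast : ZMod n) = y.cast) : x = y := by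
  apply (ZMod.chineseRemainder h).injective
  refine Prod.ext ?_ ?_
  · exact (Prod.fst_zmod_cast x).trans (hm.trans (Prod.fst_zmod_cast y).symm)
  · exact (Prod.snd_zmod_cast x).trans (hn.trans (Prod.snd_zmod_cast y).symm)

theorem ZMod.exists_cast_eq_of_coprime (h : m.Coprime n) (a : ZMod m) (b : ZMod n) :
    ∃ x : ZMod (m * n), (x.cast : ZMod m) = a ∧ (x.cast : ZMod n) = b := by
  refine ⟨(ZMod.chineseRemainder h).symm (a, b), ?_, ?_⟩
  · rw [← Prod.fst_zmod_cast (S := ZMod n)]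
    exact congrArg Prod.fst ((ZMod.chineseRemainder h).apply_symm_apply (a, b))
  · rw [← Prod.snd_zmod_cast (R := ZMod m)]
    exact congrArg Prod.snd ((ZMod.chineseRemainder h).apply_symm_apply (a, b))

theorem Matrix.eq_of_map_cast_eq_of_coprime (h : m.Coprime n) {ι κ : Type*}
    {A B : Matrix ι κ (ZMod (m * n))}
    (hm : A.map (ZMod.cast : ZMod (m * n) → ZMod m) = B.map ZMod.cast)
    (hn : A.map (ZMod.cast : ZMod (m * n) → ZMod n) = B.map ZMod.cast) : A = B := by
  ext i j
  exact ZMod.eq_of_cast_eq_of_coprime h (congrFun (congrFun hm i) j) (congrFun (congrFun hn i) j)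

end ChineseRemainder

section Tuples

variable {N : ℕ}

theorem matE_mul_mul_matE_apply_one_one (x y : ZMod N) (A : Matrix (Fin 2) (Fin 2) (ZMod N)) :
    (matE y * A * matE x) 1 1 = -A 0 0 := by
  rw [Matrix.eta_fin_two A]
  simp [matE]

theorem Mlist_cons (x : ZMod N) (l : List (ZMod N)) : Mlist (x :: l) = Mlist l * matE x := by
  simp [Mlist]

theorem Mlist_append_singleton (l : List (ZMod N)) (y : ZMod N) :
    Mlist (l ++ [y]) = matE y * Mlist l := by
  simp [Mlist]

theorem Mlist_replicate (n : ℕ) (k : ZMod N) : Mlist (List.replicate n k) = matE k ^ n := by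
  simp [Mlist, List.map_replicate, List.reverse_replicate, List.prod_replicate]

theorem EquivL.eq_replicate {n : ℕ} {k : ZMod N} {c : List (ZMod N)}
    (h : EquivL (List.replicate n k) c) : c = List.replicate n k := by
  rcases h with ⟨i, rfl⟩ | ⟨i, rfl⟩ <;> simp [List.rotate_replicate]

theorem oplus_cons_append_singleton (a mid : List (ZMod N)) (x y : ZMod N) :
    oplus a (x :: (mid ++ [y])) =
      (a.head?.getD 0 + y) :: (a.tail.dropLast ++ (a.getLast?.getD 0 + x) :: mid) := by
  have hlast : (x :: (mid ++ [y])).getLast? = some y := by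
    rw [← List.cons_append, List.getLast?_concat]
  simp [oplus, hlast]

theorem exists_matE_pow_apply_zero_zero_of_reducible_replicate {n : ℕ} {k : ZMod N}
    (h : Reducible (List.replicate n k)) :
    ∃ m, 0 < m ∧ m + 3 ≤ n ∧ ((matE k ^ m) 0 0 = 1 ∨ (matE k ^ m) 0 0 = -1) := by
  obtain ⟨a, b, ha, hb, hbsol, hequiv⟩ := h
  obtain ⟨x, mid, y, rfl⟩ : ∃ x mid y, b = x :: (mid ++ [y]) := by
    match b, hb with
    | x :: t, hb =>
      obtain ⟨mid, y, rfl⟩ := (List.eq_nil_or_concat' t).resolve_left (by rintro rfl; simp at hb)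
      exact ⟨x, mid, y, rfl⟩
  obtain ⟨hlen, hmem⟩ := List.eq_replicate_iff.mp hequiv.eq_replicate
  rw [oplus_cons_append_singleton] at hlen hmem
  have hmid : mid = List.replicate mid.length k :=
    List.eq_replicate_iff.mpr ⟨rfl, fun z hz => hmem z (by simp [hz])⟩
  have hMb : Mlist (x :: (mid ++ [y])) = matE y * matE k ^ mid.length * matE x := by
    rw [Mlist_cons, Mlist_append_singleton, hmid, Mlist_replicate, List.length_replicate]
  simp only [List.length_cons, List.length_append, List.length_nil] at hb
  simp only [List.length_cons, List.length_append, List.length_dropLast, List.length_tail] at hlen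
  refine ⟨mid.length, by omega, by omega, ?_⟩
  have h11 := congrFun (congrFun hMb 1) 1
  rw [matE_mul_mul_matE_apply_one_one] at h11
  rcases hbsol with hb1 | hb1
  · rw [hb1, Matrix.one_apply_eq] at h11
    exact Or.inr (by linear_combination h11)
  · rw [hb1, Matrix.neg_apply, Matrix.one_apply_eq] at h11
    exact Or.inl (by linear_combination h11)

end Tuples

section Powers

variable {N : ℕ}

theorem matE_pow_map_cast {M : ℕ} (h : M ∣ N) (a : ZMod N) (j : ℕ) :
    (matE a ^ j).map (ZMod.cast : ZMod N → ZMod M) = matE (a.cast : ZMod M) ^ j := by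
  rw [show (ZMod.cast : ZMod N → ZMod M) = ZMod.castHom h (ZMod M) from rfl, Matrix.map_pow]
  congr 1
  ext i l
  fin_cases i <;> fin_cases l <;> simp [matE, ZMod.cast_one h, ZMod.cast_neg h]

theorem matE_zero_sq : matE (0 : ZMod N) ^ 2 = -1 := by
  ext i j
  fin_cases i <;> fin_cases j <;> simp [sq, matE]

theorem matE_zero_pow_four : matE (0 : ZMod N) ^ 4 = 1 := by
  rw [show 4 = 2 * 2 from rfl, pow_mul, matE_zero_sq, neg_one_sq]

theorem matE_zero_pow_apply_zero_zero (m : ℕ) :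
    (matE (0 : ZMod N) ^ m) 0 0 = if m % 4 = 0 then 1 else if m % 4 = 2 then -1 else 0 := by
  rw [pow_eq_pow_mod m matE_zero_pow_four]
  have := Nat.mod_lt m (show 0 < 4 by norm_num)
  interval_cases m % 4 <;> simp [pow_succ, matE]

theorem matE_two_pow (m : ℕ) :
    matE (2 : ZMod N) ^ m = !![(m : ZMod N) + 1, -m; m, 1 - m] := by
  induction m with
  | zero => simp [Matrix.one_fin_two]
  | succ m ih =>
    rw [pow_succ, ih]
    ext i j
    fin_cases i <;> fin_cases j <;> simp [matE] <;> ring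

theorem matE_two_pow_apply_zero_zero (m : ℕ) : (matE (2 : ZMod N) ^ m) 0 0 = m + 1 := by
  simp [matE_two_pow]

theorem four_dvd_of_matE_zero_pow_apply_zero_zero_eq_one {m : ℕ}
    (h : (matE (0 : ZMod 3) ^ m) 0 0 = 1) : 4 ∣ m := by
  rw [matE_zero_pow_apply_zero_zero] at h
  split_ifs at h with h0 h2
  · exact Nat.dvd_of_mod_eq_zero h0
  all_goals exact absurd h (by decide)

theorem four_dvd_add_two_of_matE_zero_pow_apply_zero_zero_eq_neg_one {m : ℕ}
    (h : (matE (0 : ZMod 3) ^ m) 0 0 = -1) : 4 ∣ m + 2 := by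
  rw [matE_zero_pow_apply_zero_zero] at h
  split_ifs at h with h0 h2
  · exact absurd h (by decide)
  · omega
  · exact absurd h (by decide)

theorem dvd_of_matE_two_pow_apply_zero_zero_eq_one {m : ℕ}
    (h : (matE (2 : ZMod N) ^ m) 0 0 = 1) : N ∣ m := by
  rw [matE_two_pow_apply_zero_zero, add_eq_right] at h
  rwa [← ZMod.natCast_eq_zero_iff]

theorem dvd_add_two_of_matE_two_pow_apply_zero_zero_eq_neg_one {m : ℕ}
    (h : (matE (2 : ZMod N) ^ m) 0 0 = -1) : N ∣ m + 2 := by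
  rw [matE_two_pow_apply_zero_zero] at h
  rw [← ZMod.natCast_eq_zero_iff]
  push_cast
  linear_combination h

end Powers

theorem exists_irreducible_replicate_solution {M : ℕ} (hM : Nat.Coprime 6 M) :
    ∃ k : ZMod (3 * M), IsSolL (List.replicate (4 * M) k) ∧
      ¬ Reducible (List.replicate (4 * M) k) := by
  have h3 : Nat.Coprime 3 M := Nat.Coprime.coprime_dvd_left (by norm_num) hM
  have h4 : Nat.Coprime 4 M := (Nat.Coprime.coprime_dvd_left (show 2 ∣ 6 by norm_num) hM).pow_left 2
  obtain ⟨k, hk₃, hkM⟩ := ZMod.exists_cast_eq_of_coprime h3 0 2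
  have hE₃ := matE_pow_map_cast (dvd_mul_right 3 M) k
  have hEM := matE_pow_map_cast (dvd_mul_left M 3) k
  rw [hk₃] at hE₃
  rw [hkM] at hEM
  refine ⟨k, Or.inl ?_, fun hred => ?_⟩
  · rw [Mlist_replicate]
    refine Matrix.eq_of_map_cast_eq_of_coprime h3 ?_ ?_
    · rw [hE₃, pow_mul, matE_zero_pow_four, one_pow,
        Matrix.map_one _ ZMod.cast_zero (ZMod.cast_one (dvd_mul_right 3 M))]
    · rw [hEM, matE_two_pow, Matrix.map_one _ ZMod.cast_zero (ZMod.cast_one (dvd_mul_left M 3))]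
      simp [Matrix.one_fin_two]
  · obtain ⟨j, hj0, hjn, hj⟩ := exists_matE_pow_apply_zero_zero_of_reducible_replicate hred
    have hj₃ : (matE (0 : ZMod 3) ^ j) 0 0 = ((matE k ^ j) 0 0).cast := by rw [← hE₃]; rfl
    have hjM : (matE (2 : ZMod M) ^ j) 0 0 = ((matE k ^ j) 0 0).cast := by rw [← hEM]; rfl
    rcases hj with h | h
    · rw [h, ZMod.cast_one (dvd_mul_right 3 M)] at hj₃
      rw [h, ZMod.cast_one (dvd_mul_left M 3)] at hjM
      have := h4.mul_dvd_of_dvd_of_dvd (four_dvd_of_matE_zero_pow_apply_zero_zero_eq_one hj₃)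
        (dvd_of_matE_two_pow_apply_zero_zero_eq_one hjM)
      exact absurd (Nat.le_of_dvd hj0 this) (by omega)
    · rw [h, ZMod.cast_neg (dvd_mul_right 3 M), ZMod.cast_one (dvd_mul_right 3 M)] at hj₃
      rw [h, ZMod.cast_neg (dvd_mul_left M 3), ZMod.cast_one (dvd_mul_left M 3)] at hjM
      have := h4.mul_dvd_of_dvd_of_dvd
        (four_dvd_add_two_of_matE_zero_pow_apply_zero_zero_eq_neg_one hj₃)
        (dvd_add_two_of_matE_two_pow_apply_zero_zero_eq_neg_one hjM)
      exact absurd (Nat.le_of_dvd (by omega) this) (by omega)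

theorem stmt15 :
    ¬ ∃ K : ℕ, 1 ≤ K ∧ ∀ N : ℕ, 2 ≤ N → ∀ c : List (ZMod N),
      IsSolL c → 3 ≤ c.length → ¬ Reducible c → c.length ≤ N + K := by
  rintro ⟨K, -, hbound⟩
  obtain ⟨k, hsol, hirr⟩ := exists_irreducible_replicate_solution (M := 6 * K + 5)
    ((Nat.coprime_mul_left_add_right 6 5 K).mpr (by decide))
  have := hbound _ (by omega) _ hsol (by rw [List.length_replicate]; omega) hirr
  simp only [List.length_replicate] at this
  omega
end
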